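/- arXiv:1204.5068 — 5 statements merged into one kernel-verified Lean document; each statement's English description precedes it below -/
import Mathlib

section
/- Let α, β > 1 and A, B > 0. There exists a > 0, depending only on α, β, A and B, with the following property. Let (Ω, P) be a probability space carrying ℕ-valued random variables X and Y_0, Y_1, Y_2, … that are mutually independent, where each Y_i has the same distribution as a ℕ-valued random variable Y. Suppose E[α^X] ≤ A and E[β^Y] ≤ B. Define Z(ω) = ∑_{i < X(ω)} Y_i(ω), the number of grandchildren in the two-generation branching process in which the root has X children and each child independently has Y children. Then for every natural number s, P(Z ≥ s) ≤ A·e^{−a·s}. -/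
/-!
Choose `θ ∈ (0, 1]` with `B ^ θ ≤ α` and put `z = β ^ θ`. By Jensen's inequality for the concave
map `t ↦ t ^ θ`, `E[z ^ Y] = E[(β ^ Y) ^ θ] ≤ B ^ θ ≤ α`. Conditioning on `X` shows that the
generating function of the random sum `Z = ∑_{i < X} Y_i` is the composite `F_X ∘ F_Y`, so
`E[z ^ Z] = E[E[z ^ Y] ^ X] ≤ E[α ^ X] ≤ A`, and Markov's inequality gives
`P(Z ≥ s) ≤ A z⁻ˢ = A e^{-θ log β · s}`.
-/

open MeasureTheory ProbabilityTheory ENNReal Filter Topology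

section

variable {Ω : Type*} [MeasurableSpace Ω] {P : Measure Ω}

lemma lintegral_rpow_le_rpow_lintegral [IsProbabilityMeasure P] {f : Ω → ℝ≥0∞}
    (hf : AEMeasurable f P) {θ : ℝ} (hθ₀ : 0 < θ) (hθ₁ : θ ≤ 1) :
    ∫⁻ ω, f ω ^ θ ∂P ≤ (∫⁻ ω, f ω ∂P) ^ θ := by
  have h := eLpNorm'_le_eLpNorm'_of_exponent_le hθ₀ hθ₁ P hf.aestronglyMeasurable
  simp only [eLpNorm', enorm_eq_self, rpow_one, div_one] at h
  calc ∫⁻ ω, f ω ^ θ ∂P = ((∫⁻ ω, f ω ^ θ ∂P) ^ (1 / θ)) ^ θ := by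
        rw [← rpow_mul, one_div_mul_cancel hθ₀.ne', rpow_one]
    _ ≤ (∫⁻ ω, f ω ∂P) ^ θ := rpow_le_rpow h hθ₀.le

lemma lintegral_rpow_pow_le_rpow_lintegral_pow [IsProbabilityMeasure P] {Y : Ω → ℕ}
    (hY : Measurable Y) (c : ℝ≥0∞) {θ : ℝ} (hθ₀ : 0 < θ) (hθ₁ : θ ≤ 1) :
    ∫⁻ ω, (c ^ θ) ^ Y ω ∂P ≤ (∫⁻ ω, c ^ Y ω ∂P) ^ θ := by
  have hcomm : ∀ n : ℕ, (c ^ θ) ^ n = (c ^ n) ^ θ := fun n => by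
    rw [← rpow_natCast, ← rpow_natCast, ← rpow_mul, ← rpow_mul, mul_comm]
  simp only [hcomm]
  exact lintegral_rpow_le_rpow_lintegral (measurable_of_countable _ |>.comp hY).aemeasurable
    hθ₀ hθ₁

lemma lintegral_comp_eq_tsum_setLIntegral {X : Ω → ℕ} (hX : Measurable X)
    (F : ℕ → Ω → ℝ≥0∞) :
    ∫⁻ ω, F (X ω) ω ∂P = ∑' n, ∫⁻ ω in X ⁻¹' {n}, F n ω ∂P := by
  have hcover : (⋃ n, X ⁻¹' {n}) = Set.univ := by
    ext ω; simp
  rw [← setLIntegral_univ, ← hcover,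
    lintegral_iUnion (fun n => hX (measurableSet_singleton n))
      (fun m n hmn => (Set.disjoint_singleton.mpr hmn).preimage X)]
  refine tsum_congr fun n => setLIntegral_congr_fun (hX (measurableSet_singleton n)) ?_
  intro ω hω
  rw [Set.mem_preimage, Set.mem_singleton_iff] at hω
  simp only [hω]

lemma setLIntegral_preimage_prod_of_iIndepFun {ι β : Type*} [MeasurableSpace β]
    {X : Ω → β} {Ys : ι → Ω → β} (hX : Measurable X) (hYs : ∀ i, Measurable (Ys i))
    (hindep : iIndepFun (fun o : Option ι => o.elim X Ys) P)
    {t : Set β} (ht : MeasurableSet t) {ψ : β → ℝ≥0∞} (hψ : Measurable ψ) (s : Finset ι) :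
    ∫⁻ ω in X ⁻¹' t, ∏ i ∈ s, ψ (Ys i ω) ∂P = P (X ⁻¹' t) * ∏ i ∈ s, ∫⁻ ω, ψ (Ys i ω) ∂P := by
  classical
  set φ : Option ι → β → ℝ≥0∞ := fun o => o.elim (t.indicator 1) fun _ => ψ
  have hφ : ∀ o, Measurable (φ o) := by
    rintro (_ | i)
    exacts [measurable_one.indicator ht, hψ]
  have hmeas : ∀ o, Measurable (φ o ∘ o.elim X Ys) := by
    rintro (_ | i)
    exacts [(hφ none).comp hX, (hφ (some i)).comp (hYs i)]
  have key := lintegral_prod_eq_prod_lintegral_of_indepFun (Finset.insertNone s) _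
    (hindep.comp φ hφ) hmeas
  have hpre : ∀ ω, t.indicator 1 (X ω) = (X ⁻¹' t).indicator (1 : Ω → ℝ≥0∞) ω := fun _ => rfl
  simp only [Finset.prod_insertNone, Function.comp_apply, Option.elim, φ, hpre,
    lintegral_indicator_one (hX ht)] at key
  rw [← lintegral_indicator (hX ht), ← key]
  refine lintegral_congr fun ω => ?_
  simp [Set.indicator_apply]

theorem lintegral_pow_sum_range_eq_lintegral_pow {X Y : Ω → ℕ} {Ys : ℕ → Ω → ℕ}
    (hX : Measurable X) (hY : Measurable Y) (hYs : ∀ i, Measurable (Ys i))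
    (hindep : iIndepFun (fun o : Option ℕ => o.elim X Ys) P)
    (hident : ∀ i, P.map (Ys i) = P.map Y) (z : ℝ≥0∞) :
    ∫⁻ ω, z ^ ∑ i ∈ Finset.range (X ω), Ys i ω ∂P = ∫⁻ ω, (∫⁻ ω', z ^ Y ω' ∂P) ^ X ω ∂P := by
  have hmoment : ∀ i, ∫⁻ ω, z ^ Ys i ω ∂P = ∫⁻ ω, z ^ Y ω ∂P := fun i =>
    ((IdentDistrib.mk (hYs i).aemeasurable hY.aemeasurable (hident i)).comp
      (measurable_of_countable fun k => z ^ k)).lintegral_eq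
  rw [lintegral_comp_eq_tsum_setLIntegral hX (fun n ω => z ^ ∑ i ∈ Finset.range n, Ys i ω),
    lintegral_comp_eq_tsum_setLIntegral hX (fun n _ => (∫⁻ ω', z ^ Y ω' ∂P) ^ n)]
  refine tsum_congr fun n => ?_
  simp only [← Finset.prod_pow_eq_pow_sum]
  rw [setLIntegral_preimage_prod_of_iIndepFun hX hYs hindep (measurableSet_singleton n)
    (measurable_of_countable _), setLIntegral_const, Finset.prod_congr rfl fun i _ => hmoment i,
    Finset.prod_const, Finset.card_range, mul_comm]

lemma measure_ge_le_ofReal_mul_exp_neg_of_lintegral_exp_pow_le {Z : Ω → ℕ}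
    (hZ : Measurable Z) {a A : ℝ} (ha : 0 ≤ a)
    (hmoment : ∫⁻ ω, ENNReal.ofReal (Real.exp a) ^ Z ω ∂P ≤ ENNReal.ofReal A) (s : ℕ) :
    P {ω | s ≤ Z ω} ≤ ENNReal.ofReal (A * Real.exp (-a * s)) := by
  set z := ENNReal.ofReal (Real.exp a)
  have hz : 1 ≤ z := ENNReal.one_le_ofReal.mpr (Real.one_le_exp ha)
  have hzs₀ : z ^ s ≠ 0 := pow_ne_zero _ (zero_lt_one.trans_le hz).ne'
  have hzs_top : z ^ s ≠ ∞ := pow_ne_top ofReal_ne_top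
  have hmarkov : z ^ s * P {ω | s ≤ Z ω} ≤ ∫⁻ ω, z ^ Z ω ∂P :=
    calc z ^ s * P {ω | s ≤ Z ω} ≤ z ^ s * P {ω | z ^ s ≤ z ^ Z ω} :=
          mul_le_mul_right (measure_mono fun ω hω => pow_le_pow_right₀ hz hω) _
      _ ≤ ∫⁻ ω, z ^ Z ω ∂P := mul_meas_ge_le_lintegral (measurable_of_countable _ |>.comp hZ) _
  have hexp : ENNReal.ofReal (A * Real.exp (-a * s)) = ENNReal.ofReal A / z ^ s := by
    rw [ENNReal.ofReal_mul' (Real.exp_nonneg _), div_eq_mul_inv, ← ENNReal.ofReal_pow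
      (Real.exp_nonneg a), ← Real.exp_nat_mul, ← ENNReal.ofReal_inv_of_pos (Real.exp_pos _),
      ← Real.exp_neg, neg_mul, mul_comm (s : ℝ) a]
  rw [hexp, ENNReal.le_div_iff_mul_le (Or.inl hzs₀) (Or.inl hzs_top), mul_comm]
  exact hmarkov.trans hmoment

end

lemma exists_pos_le_one_rpow_le {B α : ℝ} (hB : B ≠ 0) (hα : 1 < α) :
    ∃ θ : ℝ, 0 < θ ∧ θ ≤ 1 ∧ B ^ θ ≤ α := by
  have hlim : Tendsto (fun θ : ℝ => B ^ θ) (𝓝[>] 0) (𝓝 1) := by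
    simpa using (Real.continuousAt_const_rpow hB (b := 0)).tendsto.mono_left nhdsWithin_le_nhds
  obtain ⟨θ, hBθ, hθ₀, hθ₁⟩ :=
    ((hlim.eventually (eventually_le_nhds hα)).and (Ioc_mem_nhdsGT zero_lt_one)).exists
  exact ⟨θ, hθ₀, hθ₁, hBθ⟩

theorem two_generation_branching_tail_general (α β A B : ℝ) (hα : 1 < α) (hβ : 1 < β)
    (hB : 0 < B) :
    ∃ a : ℝ, 0 < a ∧
      ∀ (Ω : Type) (_ : MeasurableSpace Ω) (P : Measure Ω), IsProbabilityMeasure P →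
        ∀ (X Y : Ω → ℕ) (Ys : ℕ → Ω → ℕ),
          Measurable X → Measurable Y → (∀ i, Measurable (Ys i)) →
          iIndepFun (fun o : Option ℕ => o.elim X Ys) P →
          (∀ i, P.map (Ys i) = P.map Y) →
          (∫⁻ ω, (ENNReal.ofReal α) ^ X ω ∂P) ≤ ENNReal.ofReal A →
          (∫⁻ ω, (ENNReal.ofReal β) ^ Y ω ∂P) ≤ ENNReal.ofReal B →
          ∀ s : ℕ,
            P {ω | s ≤ ∑ i ∈ Finset.range (X ω), Ys i ω} ≤
              ENNReal.ofReal (A * Real.exp (-a * s)) := by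
  obtain ⟨θ, hθ₀, hθ₁, hBθ⟩ := exists_pos_le_one_rpow_le hB.ne' hα
  have hlogβ := Real.log_pos hβ
  refine ⟨θ * Real.log β, mul_pos hθ₀ hlogβ, ?_⟩
  intro Ω _ P _ X Y Ys hX hY hYs hindep hident hαX hβY s
  have hZ : Measurable fun ω => ∑ i ∈ Finset.range (X ω), Ys i ω :=
    (measurable_from_prod_countable_right (f := fun p : ℕ × Ω => ∑ i ∈ Finset.range p.1, Ys i p.2)
      fun n => Finset.measurable_sum (Finset.range n) fun i _ => hYs i).comp
      (hX.prodMk measurable_id)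
  have hz : ENNReal.ofReal (Real.exp (θ * Real.log β)) = ENNReal.ofReal β ^ θ := by
    rw [mul_comm, ← Real.rpow_def_of_pos (zero_lt_one.trans hβ),
      ofReal_rpow_of_pos (zero_lt_one.trans hβ)]
  have hYmoment : ∫⁻ ω, (ENNReal.ofReal β ^ θ) ^ Y ω ∂P ≤ ENNReal.ofReal α :=
    calc ∫⁻ ω, (ENNReal.ofReal β ^ θ) ^ Y ω ∂P ≤ (∫⁻ ω, ENNReal.ofReal β ^ Y ω ∂P) ^ θ :=
          lintegral_rpow_pow_le_rpow_lintegral_pow hY _ hθ₀ hθ₁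
      _ ≤ ENNReal.ofReal B ^ θ := rpow_le_rpow hβY hθ₀.le
      _ = ENNReal.ofReal (B ^ θ) := ofReal_rpow_of_pos hB
      _ ≤ ENNReal.ofReal α := ofReal_le_ofReal hBθ
  refine measure_ge_le_ofReal_mul_exp_neg_of_lintegral_exp_pow_le hZ (mul_pos hθ₀ hlogβ).le ?_ s
  rw [hz]
  calc ∫⁻ ω, (ENNReal.ofReal β ^ θ) ^ ∑ i ∈ Finset.range (X ω), Ys i ω ∂P
      = ∫⁻ ω, (∫⁻ ω', (ENNReal.ofReal β ^ θ) ^ Y ω' ∂P) ^ X ω ∂P :=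
        lintegral_pow_sum_range_eq_lintegral_pow hX hY hYs hindep hident _
    _ ≤ ∫⁻ ω, ENNReal.ofReal α ^ X ω ∂P :=
        lintegral_mono fun ω => pow_le_pow_left₀ zero_le hYmoment _
    _ ≤ ENNReal.ofReal A := hαX

/-- **Two-generation branching processes have exponential tails.**
If `E[α^X] ≤ A` and `E[β^Y] ≤ B` for some `α, β > 1`, then the number of
grandchildren `Z = ∑_{i < X} Y_i` of the two-generation branching process in
which the root has `X` children and each child independently has `Y` children
satisfies `P(Z ≥ s) ≤ A e^{-a s}`, where `a > 0` depends only on `α, β, A, B`. -/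
theorem two_generation_branching_tail (α β A B : ℝ) (hα : 1 < α) (hβ : 1 < β)
    (hA : 0 < A) (hB : 0 < B) :
    ∃ a : ℝ, 0 < a ∧
      ∀ (Ω : Type) (_ : MeasurableSpace Ω) (P : Measure Ω), IsProbabilityMeasure P →
        ∀ (X Y : Ω → ℕ) (Ys : ℕ → Ω → ℕ),
          Measurable X → Measurable Y → (∀ i, Measurable (Ys i)) →
          iIndepFun (fun o : Option ℕ => o.elim X Ys) P →
          (∀ i, P.map (Ys i) = P.map Y) →
          (∫⁻ ω, (ENNReal.ofReal α) ^ X ω ∂P) ≤ ENNReal.ofReal A →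
          (∫⁻ ω, (ENNReal.ofReal β) ^ Y ω ∂P) ≤ ENNReal.ofReal B →
          ∀ s : ℕ,
            P {ω | s ≤ ∑ i ∈ Finset.range (X ω), Ys i ω} ≤
              ENNReal.ofReal (A * Real.exp (-a * s)) :=
  two_generation_branching_tail_general α β A B hα hβ hB
end

section
/- Let β > 1, B > 0 and 0 ≤ μ < 1. There exist δ > 1 and D > 0, depending only on β, B and μ, with the following property. Let (Z_i)_{i ≥ 1} be independent identically distributed ℕ-valued random variables on a probability space (Ω, P) with E[Z_1] ≤ μ and E[β^{Z_1}] ≤ B. Define T(ω) = inf{ s ≥ 1 : ∑_{i=1}^{s} Z_i(ω) = s − 1 }, with the convention T(ω) = 0 if no such s exists; via the breadth-first exploration, T is the total size of the Galton–Watson branching process in which each node independently has offspring distributed as Z_1. Then E[δ^T] ≤ D. -/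
/-!
If `1 < t ≤ β`, then `t ^ z ≤ 1 + z (t - 1) + ((t - 1) / (β - 1))² β ^ z`, so
`E[t^Z] ≤ 1 + (t - 1) μ + O((t - 1)²) B`, which is `< t` once `t` is close enough to `1`
(in terms of `β`, `B`, `μ` only). For such `t` and `m := 1 + (t - 1) μ + …`, the event
`T = k + 1` forces `∑_{i ≤ k} Z_i = k`, so by Chernoff's bound and independence
`P(T = k + 1) ≤ t^{-k} E[t^Z]^{k+1} ≤ t (m / t)^{k+1}`. Hence `E[δ^T]` is dominated by a
convergent geometric series for every `1 < δ < t / m`.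
-/

open MeasureTheory ProbabilityTheory Finset
open scoped ENNReal

theorem pow_le_one_add_mul_add_sq_div_mul_pow {β t : ℝ} (hβ : 1 < β) (ht : 1 ≤ t) (htβ : t ≤ β)
    (n : ℕ) : t ^ n ≤ 1 + n * (t - 1) + ((t - 1) / (β - 1)) ^ 2 * β ^ n := by
  set c := ((t - 1) / (β - 1)) ^ 2 with hc
  have hc0 : 0 ≤ c := sq_nonneg _
  have hc_mul : c * (β - 1) ^ 2 = (t - 1) ^ 2 := by
    rw [hc, div_pow, div_mul_cancel₀ _ (by positivity)]
  clear_value c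
  have hbernoulli : ∀ k : ℕ, 1 + k * (β - 1) ≤ β ^ k := fun k => by
    simpa using one_add_mul_le_pow (by linarith : (-2 : ℝ) ≤ β - 1) k
  -- Only the sharper bound, with the nonnegative Bernoulli remainder, survives the induction.
  suffices h : t ^ n ≤ 1 + n * (t - 1) + c * (β ^ n - 1 - n * (β - 1)) by
    have := mul_nonneg hc0 (mul_nonneg (Nat.cast_nonneg n) (by linarith : (0 : ℝ) ≤ β - 1))
    nlinarith
  induction n with
  | zero => simp
  | succ n ih =>
    have hstep : t ^ (n + 1) ≤ t * (1 + n * (t - 1) + c * (β ^ n - 1 - n * (β - 1))) := by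
      rw [pow_succ']
      exact mul_le_mul_of_nonneg_left ih (by linarith)
    refine hstep.trans ?_
    rw [pow_succ]
    push_cast
    have hrem : 0 ≤ β ^ n - 1 - n * (β - 1) := by linarith [hbernoulli n]
    linear_combination (-(n : ℝ)) * hc_mul +
      mul_nonneg (mul_nonneg hc0 (by linarith : (0 : ℝ) ≤ β - t)) hrem

theorem ENNReal.ofReal_pow_le_one_add_mul_add_sq_div_mul_pow {β t : ℝ} (hβ : 1 < β) (ht : 1 ≤ t)
    (htβ : t ≤ β) (n : ℕ) :
    ENNReal.ofReal t ^ n ≤ 1 + ENNReal.ofReal (t - 1) * n +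
      ENNReal.ofReal (((t - 1) / (β - 1)) ^ 2) * ENNReal.ofReal β ^ n := by
  rw [← ENNReal.ofReal_pow (by linarith), ← ENNReal.ofReal_pow (by linarith),
    ← ENNReal.ofReal_natCast, ← ENNReal.ofReal_mul (by linarith), ← ENNReal.ofReal_one,
    ← ENNReal.ofReal_mul (sq_nonneg _), ← ENNReal.ofReal_add zero_le_one (by positivity),
    ← ENNReal.ofReal_add (by positivity) (by positivity)]
  exact ENNReal.ofReal_le_ofReal <| by
    linarith [pow_le_one_add_mul_add_sq_div_mul_pow hβ ht htβ n]

theorem exists_one_add_mul_add_sq_div_mul_lt_self {β μ B : ℝ} (hβ : 1 < β) (hB : 0 < B)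
    (hμ : μ < 1) : ∃ t, 1 < t ∧ t ≤ β ∧ 1 + (t - 1) * μ + ((t - 1) / (β - 1)) ^ 2 * B < t := by
  obtain ⟨ε, hε0, hεβ, hεB⟩ : ∃ ε : ℝ, 0 < ε ∧ ε ≤ β - 1 ∧ ε * B < (1 - μ) * (β - 1) ^ 2 := by
    refine ⟨min (β - 1) ((1 - μ) * (β - 1) ^ 2 / (2 * B)), by positivity, min_le_left _ _, ?_⟩
    calc min (β - 1) ((1 - μ) * (β - 1) ^ 2 / (2 * B)) * B
        ≤ (1 - μ) * (β - 1) ^ 2 / (2 * B) * B := by gcongr; exact min_le_right _ _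
      _ < (1 - μ) * (β - 1) ^ 2 := by
        field_simp
        nlinarith [mul_pos (sub_pos.mpr hμ) (pow_pos (sub_pos.mpr hβ) 2)]
  refine ⟨1 + ε, by linarith, by linarith, ?_⟩
  have hβ1 : 0 < β - 1 := by linarith
  rw [add_sub_cancel_left, div_pow, ← sub_pos]
  calc (0 : ℝ) < ε * ((1 - μ) * (β - 1) ^ 2 - ε * B) / (β - 1) ^ 2 :=
        div_pos (mul_pos hε0 (by linarith)) (by positivity)
    _ = 1 + ε - (1 + ε * μ + ε ^ 2 / (β - 1) ^ 2 * B) := by field_simp; ring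

theorem ENNReal.pow_sInf_le_one_add_tsum_indicator (δ : ℝ≥0∞) (S : Set ℕ) :
    δ ^ sInf S ≤ 1 + ∑' n, S.indicator (δ ^ ·) n := by
  rcases S.eq_empty_or_nonempty with rfl | hS
  · simp
  · calc δ ^ sInf S = S.indicator (δ ^ ·) (sInf S) :=
          (Set.indicator_of_mem (Nat.sInf_mem hS) _).symm
      _ ≤ ∑' n, S.indicator (δ ^ ·) n := ENNReal.le_tsum _
      _ ≤ 1 + ∑' n, S.indicator (δ ^ ·) n := le_add_self

section GaltonWatson

variable {Ω : Type*} [MeasurableSpace Ω] {P : Measure Ω}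

theorem lintegral_ofReal_pow_le_of_moments [IsProbabilityMeasure P] {X : Ω → ℕ}
    (hX : Measurable X) {β t μ B : ℝ} (hβ : 1 < β) (ht : 1 ≤ t) (htβ : t ≤ β) (hμ : 0 ≤ μ)
    (hB : 0 ≤ B) (hmean : ∫⁻ ω, (X ω : ℝ≥0∞) ∂P ≤ ENNReal.ofReal μ)
    (hexp : ∫⁻ ω, ENNReal.ofReal β ^ X ω ∂P ≤ ENNReal.ofReal B) :
    ∫⁻ ω, ENNReal.ofReal t ^ X ω ∂P ≤
      ENNReal.ofReal (1 + (t - 1) * μ + ((t - 1) / (β - 1)) ^ 2 * B) := by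
  have hXcast : Measurable fun ω => (X ω : ℝ≥0∞) := measurable_from_nat.comp hX
  have hXβ : Measurable fun ω => ENNReal.ofReal β ^ X ω := measurable_from_nat.comp hX
  calc ∫⁻ ω, ENNReal.ofReal t ^ X ω ∂P
      ≤ ∫⁻ ω, (1 + ENNReal.ofReal (t - 1) * X ω +
          ENNReal.ofReal (((t - 1) / (β - 1)) ^ 2) * ENNReal.ofReal β ^ X ω) ∂P :=
        lintegral_mono fun ω =>
          ENNReal.ofReal_pow_le_one_add_mul_add_sq_div_mul_pow hβ ht htβ (X ω)
    _ = 1 + ENNReal.ofReal (t - 1) * ∫⁻ ω, (X ω : ℝ≥0∞) ∂P +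
          ENNReal.ofReal (((t - 1) / (β - 1)) ^ 2) * ∫⁻ ω, ENNReal.ofReal β ^ X ω ∂P := by
        rw [lintegral_add_right _ (hXβ.const_mul _),
          lintegral_add_left measurable_const, lintegral_const_mul _ hXcast,
          lintegral_const_mul _ hXβ, lintegral_const, measure_univ, one_mul]
    _ ≤ 1 + ENNReal.ofReal (t - 1) * ENNReal.ofReal μ +
          ENNReal.ofReal (((t - 1) / (β - 1)) ^ 2) * ENNReal.ofReal B := by
        gcongr
    _ = ENNReal.ofReal (1 + (t - 1) * μ + ((t - 1) / (β - 1)) ^ 2 * B) := by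
        rw [← ENNReal.ofReal_mul (by linarith), ← ENNReal.ofReal_mul (sq_nonneg _),
          ← ENNReal.ofReal_one, ← ENNReal.ofReal_add zero_le_one (by positivity),
          ← ENNReal.ofReal_add (by positivity) (by positivity)]

theorem lintegral_pow_sum_range_eq_pow {Z : ℕ → Ω → ℕ} (hZ : ∀ i, Measurable (Z i))
    (hindep : iIndepFun Z P) (hident : ∀ i, P.map (Z i) = P.map (Z 0)) (z : ℝ≥0∞) (n : ℕ) :
    ∫⁻ ω, z ^ (∑ i ∈ range n, Z i ω) ∂P = (∫⁻ ω, z ^ Z 0 ω ∂P) ^ n := by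
  have hpow : Measurable fun k : ℕ => z ^ k := measurable_from_nat
  simp_rw [← prod_pow_eq_pow_sum]
  rw [lintegral_prod_eq_prod_lintegral_of_indepFun _ (fun i ω => z ^ Z i ω)
    (hindep.comp _ fun _ => hpow) fun i => hpow.comp (hZ i)]
  have hident_pow : ∀ i, ∫⁻ ω, z ^ Z i ω ∂P = ∫⁻ ω, z ^ Z 0 ω ∂P := fun i =>
    (IdentDistrib.comp ⟨(hZ i).aemeasurable, (hZ 0).aemeasurable, hident i⟩ hpow).lintegral_eq
  simp [hident_pow]

-- The times `s ≥ 1` at which the breadth-first exploration queue, of length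
-- `1 + ∑_{i<s} Z_i - s`, is empty; the total size is the first of them.
def gwReturnTimes (Z : ℕ → Ω → ℕ) (ω : Ω) : Set ℕ :=
  {s | 1 ≤ s ∧ ∑ i ∈ range s, Z i ω = s - 1}

theorem measurableSet_mem_gwReturnTimes {Z : ℕ → Ω → ℕ} (hZ : ∀ i, Measurable (Z i)) (n : ℕ) :
    MeasurableSet {ω | n ∈ gwReturnTimes Z ω} :=
  MeasurableSet.const _ |>.inter <|
    measurable_sum _ (fun i _ => hZ i) (measurableSet_singleton _)

theorem pow_mul_measure_mem_gwReturnTimes_le {Z : ℕ → Ω → ℕ} (hZ : ∀ i, Measurable (Z i))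
    (hindep : iIndepFun Z P) (hident : ∀ i, P.map (Z i) = P.map (Z 0)) {t m : ℝ≥0∞}
    (hm : ∫⁻ ω, t ^ Z 0 ω ∂P ≤ m) (n : ℕ) :
    t ^ n * P {ω | n ∈ gwReturnTimes Z ω} ≤ t * m ^ n := by
  cases n with
  | zero => simp [gwReturnTimes]
  | succ k =>
    have hsub : {ω | k + 1 ∈ gwReturnTimes Z ω} ⊆
        {ω | t ^ k ≤ t ^ (∑ i ∈ range (k + 1), Z i ω)} := fun ω hω => by
      simp [hω.2]
    have hsum : Measurable fun ω => t ^ (∑ i ∈ range (k + 1), Z i ω) :=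
      measurable_from_nat.comp (measurable_sum _ fun i _ => hZ i)
    calc t ^ (k + 1) * P {ω | k + 1 ∈ gwReturnTimes Z ω}
        = t * (t ^ k * P {ω | k + 1 ∈ gwReturnTimes Z ω}) := by ring
      _ ≤ t * ∫⁻ ω, t ^ (∑ i ∈ range (k + 1), Z i ω) ∂P := by
        gcongr
        exact (mul_le_mul_right (measure_mono hsub) _).trans
          (mul_meas_ge_le_lintegral₀ hsum.aemeasurable _)
      _ ≤ t * m ^ (k + 1) := by
        rw [lintegral_pow_sum_range_eq_pow hZ hindep hident]
        gcongr

theorem lintegral_pow_sInf_gwReturnTimes_le {Z : ℕ → Ω → ℕ} (hZ : ∀ i, Measurable (Z i))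
    (hindep : iIndepFun Z P) (hident : ∀ i, P.map (Z i) = P.map (Z 0)) {t m δ q : ℝ≥0∞}
    (ht0 : t ≠ 0) (ht : t ≠ ∞) (hm : ∫⁻ ω, t ^ Z 0 ω ∂P ≤ m) (hδ : δ * m ≤ t * q) :
    ∫⁻ ω, δ ^ sInf (gwReturnTimes Z ω) ∂P ≤ 1 + t * (1 - q)⁻¹ := by
  have : IsProbabilityMeasure P := hindep.isProbabilityMeasure
  have hA := measurableSet_mem_gwReturnTimes hZ
  have hterm (n : ℕ) : δ ^ n * P {ω | n ∈ gwReturnTimes Z ω} ≤ t * q ^ n := by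
    rw [← ENNReal.mul_le_mul_iff_right (pow_ne_zero n ht0) (ENNReal.pow_ne_top ht)]
    calc t ^ n * (δ ^ n * P {ω | n ∈ gwReturnTimes Z ω})
        = δ ^ n * (t ^ n * P {ω | n ∈ gwReturnTimes Z ω}) := by ring
      _ ≤ δ ^ n * (t * m ^ n) :=
        mul_le_mul_right (pow_mul_measure_mem_gwReturnTimes_le hZ hindep hident hm n) _
      _ = t * (δ * m) ^ n := by ring
      _ ≤ t * (t * q) ^ n := by gcongr
      _ = t ^ n * (t * q ^ n) := by ring
  calc ∫⁻ ω, δ ^ sInf (gwReturnTimes Z ω) ∂P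
      ≤ ∫⁻ ω, (1 + ∑' n, {ω | n ∈ gwReturnTimes Z ω}.indicator (fun _ => δ ^ n) ω) ∂P :=
        lintegral_mono fun ω => ENNReal.pow_sInf_le_one_add_tsum_indicator δ _
    _ = 1 + ∑' n, δ ^ n * P {ω | n ∈ gwReturnTimes Z ω} := by
        rw [lintegral_add_left measurable_const, lintegral_const, measure_univ, one_mul,
          lintegral_tsum fun n => (measurable_const.indicator (hA n)).aemeasurable]
        simp_rw [lintegral_indicator_const (hA _)]
    _ ≤ 1 + ∑' n, t * q ^ n := add_le_add_right (ENNReal.tsum_le_tsum hterm) _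
    _ = 1 + t * (1 - q)⁻¹ := by rw [ENNReal.tsum_mul_left, ENNReal.tsum_geometric]

end GaltonWatson

/-- **Subcritical Galton–Watson processes have exponential tails.**
If the offspring distribution `Z` satisfies `E[Z] ≤ μ < 1` and `E[β^Z] ≤ B` for some
`β > 1`, then the total size `T` of the Galton–Watson branching process in which each
node independently has `Z` children (realized, via the breadth-first exploration, as the
first time `s ≥ 1` with `∑_{i<s} Z_i = s - 1`, and `0` if there is no such time)
satisfies `E[δ^T] ≤ D` for some `δ > 1` and `D > 0` depending only on `β, B, μ`. -/
theorem subcritical_gw_total_size_tail (β B μ : ℝ) (hβ : 1 < β) (hB : 0 < B)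
    (hμ0 : 0 ≤ μ) (hμ1 : μ < 1) :
    ∃ δ : ℝ, 1 < δ ∧ ∃ D : ℝ, 0 < D ∧
      ∀ (Ω : Type) (_ : MeasurableSpace Ω) (P : Measure Ω), IsProbabilityMeasure P →
        ∀ Z : ℕ → Ω → ℕ, (∀ i, Measurable (Z i)) →
          iIndepFun Z P →
          (∀ i, P.map (Z i) = P.map (Z 0)) →
          (∫⁻ ω, (Z 0 ω : ENNReal) ∂P) ≤ ENNReal.ofReal μ →
          (∫⁻ ω, (ENNReal.ofReal β) ^ Z 0 ω ∂P) ≤ ENNReal.ofReal B →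
          (∫⁻ ω, (ENNReal.ofReal δ) ^
              sInf {s : ℕ | 1 ≤ s ∧ ∑ i ∈ Finset.range s, Z i ω = s - 1} ∂P)
            ≤ ENNReal.ofReal D := by
  obtain ⟨t, ht1, htβ, hmt⟩ := exists_one_add_mul_add_sq_div_mul_lt_self hβ hB hμ1
  set m := 1 + (t - 1) * μ + ((t - 1) / (β - 1)) ^ 2 * B
  have ht0 : 0 < t := by linarith
  have hm0 : 0 < m := by have := mul_nonneg (sub_nonneg.mpr ht1.le) hμ0; positivity
  obtain ⟨δ, hδ1, hδm⟩ := exists_between ((one_lt_div hm0).mpr hmt)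
  set q := δ * m / t
  have hq1 : q < 1 := (div_lt_one ht0).mpr ((lt_div_iff₀ hm0).mp hδm)
  have hδq : ENNReal.ofReal δ * ENNReal.ofReal m = ENNReal.ofReal t * ENNReal.ofReal q := by
    rw [← ENNReal.ofReal_mul (by positivity), ← ENNReal.ofReal_mul ht0.le,
      mul_div_cancel₀ _ ht0.ne']
  refine ⟨δ, hδ1, 1 + t / (1 - q), by have := sub_pos.mpr hq1; positivity,
    fun Ω _ P _ Z hZ hindep hident hmean hexp => ?_⟩
  have hmoment := lintegral_ofReal_pow_le_of_moments (hZ 0) hβ ht1.le htβ hμ0 hB.le hmean hexp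
  calc _ ≤ 1 + ENNReal.ofReal t * (1 - ENNReal.ofReal q)⁻¹ :=
        lintegral_pow_sInf_gwReturnTimes_le hZ hindep hident (ENNReal.ofReal_pos.mpr ht0).ne'
          ENNReal.ofReal_ne_top hmoment hδq.le
    _ = ENNReal.ofReal (1 + t / (1 - q)) := by
        rw [← ENNReal.ofReal_one, ← ENNReal.ofReal_sub _ (by positivity),
          ← ENNReal.ofReal_inv_of_pos (sub_pos.mpr hq1), ← ENNReal.ofReal_mul ht0.le,
          ← ENNReal.ofReal_add zero_le_one (by positivity), div_eq_mul_inv t]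
end

section
/- For all β > 1, B > 0 and 0 ≤ μ < 1 there exist x > 0 and 0 < c < 1, depending only on β, B and μ, such that every ℕ-valued random variable Z (on any probability space) with E[Z] ≤ μ and E[β^Z] ≤ B satisfies E[e^{x(Z−1)}] ≤ c. -/
/-!
Write `L = log β`. Taylor's bound `exp u ≤ 1 + u + u² exp u` (valid for `u ≥ -1`) at `u = x (n - 1)`
gives `exp (x (n - 1)) ≤ 1 - x + x n + D x² βⁿ` for `0 < x ≤ min 1 (L / 2)`, with `D` depending on `β`
only. Taking expectations, `E[exp (x (Z - 1))] ≤ 1 - x (1 - μ) + D B x²`, which is at most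
`1 - x (1 - μ) / 2` once `x` is also below `(1 - μ) / (2 D B)`.
-/

open MeasureTheory ProbabilityTheory Real

theorem Real.exp_le_one_add_add_sq_mul_exp {u : ℝ} (hu : -1 ≤ u) :
    exp u ≤ 1 + u + u ^ 2 * exp u := by
  have h : (1 - u) * exp u ≤ 1 := by
    calc (1 - u) * exp u ≤ exp (-u) * exp u := by
          gcongr; linarith [add_one_le_exp (-u)]
      _ = 1 := by rw [← exp_add, neg_add_cancel, exp_zero]
  nlinarith [mul_le_mul_of_nonneg_left h (by linarith : (0 : ℝ) ≤ 1 + u)]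

theorem one_add_sq_le_max_mul_exp {a t : ℝ} (ha : 0 < a) (ht : 0 ≤ t) :
    1 + t ^ 2 ≤ max 1 (2 / a ^ 2) * exp (a * t) := by
  have hexp : 1 + (a * t) ^ 2 / 2 ≤ exp (a * t) := by
    nlinarith [quadratic_le_exp_of_nonneg (mul_nonneg ha.le ht)]
  have hsq : t ^ 2 = 2 / a ^ 2 * ((a * t) ^ 2 / 2) := by
    field_simp
  calc 1 + t ^ 2 ≤ max 1 (2 / a ^ 2) * (1 + (a * t) ^ 2 / 2) := by
        nlinarith [le_max_left 1 (2 / a ^ 2), le_max_right 1 (2 / a ^ 2), sq_nonneg (a * t)]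
    _ ≤ max 1 (2 / a ^ 2) * exp (a * t) := by gcongr

theorem exp_mul_sub_one_le {β x : ℝ} (hβ : 1 < β) (hx0 : 0 ≤ x) (hx1 : x ≤ 1)
    (hxβ : x ≤ log β / 2) (n : ℕ) :
    exp (x * (n - 1)) ≤ 1 - x + x * n + max 1 (8 / log β ^ 2) * x ^ 2 * β ^ n := by
  set L := log β
  set D := max 1 (8 / L ^ 2)
  have hL : 0 < L := log_pos hβ
  have hn : (0 : ℝ) ≤ n := n.cast_nonneg
  have hD : 1 + (n : ℝ) ^ 2 ≤ D * exp (L / 2 * n) := by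
    convert one_add_sq_le_max_mul_exp (half_pos hL) hn using 3
    ring
  have hβn : β ^ n = exp (L / 2 * n) * exp (L / 2 * n) := by
    rw [← exp_add, show L / 2 * n + L / 2 * n = n * L by ring, exp_nat_mul,
      exp_log (by linarith)]
  -- One factor `exp (L n / 2)` of `βⁿ` absorbs `exp (x (n - 1))`, the other absorbs `(n - 1)²`.
  have hsq : ((n : ℝ) - 1) ^ 2 * exp (x * (n - 1)) ≤ D * β ^ n := by
    calc ((n : ℝ) - 1) ^ 2 * exp (x * (n - 1)) ≤ (1 + (n : ℝ) ^ 2) * exp (L / 2 * n) := by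
          refine mul_le_mul (by nlinarith) (exp_le_exp.2 (by nlinarith)) (exp_pos _).le
            (by positivity)
      _ ≤ D * exp (L / 2 * n) * exp (L / 2 * n) := by gcongr
      _ = D * β ^ n := by rw [hβn, mul_assoc]
  calc exp (x * (n - 1)) ≤ 1 + x * (n - 1) + (x * (n - 1)) ^ 2 * exp (x * (n - 1)) :=
        exp_le_one_add_add_sq_mul_exp (by nlinarith)
    _ = 1 - x + x * n + x ^ 2 * (((n : ℝ) - 1) ^ 2 * exp (x * (n - 1))) := by ring
    _ ≤ 1 - x + x * n + D * x ^ 2 * β ^ n := by nlinarith [sq_nonneg x]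

theorem lintegral_ofReal_comp_le {Ω : Type*} [MeasurableSpace Ω] {P : Measure Ω}
    [IsProbabilityMeasure P] {Z : Ω → ℕ} (hZ : Measurable Z) {f : ℕ → ℝ} {a b c β : ℝ}
    (hb : 0 ≤ b) (hc : 0 ≤ c) (hβ : 0 ≤ β) (hf : ∀ n, f n ≤ a + b * n + c * β ^ n) :
    ∫⁻ ω, ENNReal.ofReal (f (Z ω)) ∂P ≤ ENNReal.ofReal a
      + ENNReal.ofReal b * ∫⁻ ω, (Z ω : ENNReal) ∂P
      + ENNReal.ofReal c * ∫⁻ ω, ENNReal.ofReal β ^ Z ω ∂P := by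
  have hZcast : Measurable fun ω ↦ (Z ω : ENNReal) := measurable_from_nat.comp hZ
  have hZpow : Measurable fun ω ↦ ENNReal.ofReal β ^ Z ω := measurable_from_nat.comp hZ
  have hpt : ∀ ω, ENNReal.ofReal (f (Z ω)) ≤ ENNReal.ofReal a
      + ENNReal.ofReal b * (Z ω : ENNReal) + ENNReal.ofReal c * ENNReal.ofReal β ^ Z ω := by
    intro ω
    calc ENNReal.ofReal (f (Z ω)) ≤ ENNReal.ofReal (a + b * Z ω + c * β ^ Z ω) :=
          ENNReal.ofReal_le_ofReal (hf _)
      _ ≤ ENNReal.ofReal a + ENNReal.ofReal (b * Z ω) + ENNReal.ofReal (c * β ^ Z ω) :=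
          ENNReal.ofReal_add_le.trans (add_le_add_left ENNReal.ofReal_add_le _)
      _ = _ := by
          rw [ENNReal.ofReal_mul hb, ENNReal.ofReal_mul hc, ENNReal.ofReal_natCast,
            ENNReal.ofReal_pow hβ]
  calc ∫⁻ ω, ENNReal.ofReal (f (Z ω)) ∂P
      ≤ ∫⁻ ω, (ENNReal.ofReal a + ENNReal.ofReal b * (Z ω : ENNReal)
          + ENNReal.ofReal c * ENNReal.ofReal β ^ Z ω) ∂P := lintegral_mono hpt
    _ = _ := by
        rw [lintegral_add_right _ (hZpow.const_mul _), lintegral_add_right _ (hZcast.const_mul _),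
          lintegral_const, measure_univ, mul_one, lintegral_const_mul _ hZcast,
          lintegral_const_mul _ hZpow]

/-- For all `β > 1`, `B > 0` and `0 ≤ μ < 1` there exist `x > 0` and `0 < c < 1`,
depending only on `β, B, μ`, such that every `ℕ`-valued random variable `Z` with
`E[Z] ≤ μ` and `E[β^Z] ≤ B` satisfies `E[e^{x(Z-1)}] ≤ c`. -/
theorem exp_moment_bound (β B μ : ℝ) (hβ : 1 < β) (hB : 0 < B)
    (hμ0 : 0 ≤ μ) (hμ1 : μ < 1) :
    ∃ x : ℝ, 0 < x ∧ ∃ c : ℝ, 0 < c ∧ c < 1 ∧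
      ∀ (Ω : Type) (_ : MeasurableSpace Ω) (P : Measure Ω), IsProbabilityMeasure P →
        ∀ Z : Ω → ℕ, Measurable Z →
          (∫⁻ ω, (Z ω : ENNReal) ∂P) ≤ ENNReal.ofReal μ →
          (∫⁻ ω, (ENNReal.ofReal β) ^ Z ω ∂P) ≤ ENNReal.ofReal B →
          (∫⁻ ω, ENNReal.ofReal (Real.exp (x * ((Z ω : ℝ) - 1))) ∂P)
            ≤ ENNReal.ofReal c := by
  set D := max 1 (8 / log β ^ 2)
  have hDB : 0 < D * B := mul_pos (lt_max_of_lt_left one_pos) hB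
  set x := min 1 (min (log β / 2) ((1 - μ) / (2 * (D * B))))
  have hx0 : 0 < x := lt_min one_pos (lt_min (by linarith [log_pos hβ]) (by positivity))
  have hx1 : x ≤ 1 := min_le_left _ _
  have hxβ : x ≤ log β / 2 := (min_le_right _ _).trans (min_le_left _ _)
  have hxDB : x * (D * B) ≤ (1 - μ) / 2 := by
    have h : x ≤ (1 - μ) / (2 * (D * B)) := (min_le_right _ _).trans (min_le_right _ _)
    rw [le_div_iff₀ (by positivity)] at h
    linarith
  refine ⟨x, hx0, 1 - x * (1 - μ) / 2, by nlinarith, by nlinarith, ?_⟩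
  intro Ω _ P _ Z hZ hmean hβZ
  calc _ ≤ ENNReal.ofReal (1 - x) + ENNReal.ofReal x * ENNReal.ofReal μ
        + ENNReal.ofReal (D * x ^ 2) * ENNReal.ofReal B := by
        refine (lintegral_ofReal_comp_le hZ hx0.le (by positivity) (by linarith)
          (exp_mul_sub_one_le hβ hx0.le hx1 hxβ)).trans ?_
        gcongr
    _ = ENNReal.ofReal (1 - x + x * μ + D * x ^ 2 * B) := by
        rw [← ENNReal.ofReal_mul hx0.le, ← ENNReal.ofReal_mul (by positivity),
          ← ENNReal.ofReal_add (by linarith) (by positivity),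
          ← ENNReal.ofReal_add (by nlinarith) (by positivity)]
    _ ≤ _ := ENNReal.ofReal_le_ofReal (by nlinarith)
end

section
/- Let ℓ ≥ 1, let G and G' be simple graphs on the same finite vertex set V with every edge of G an edge of G', and suppose there is a set W ⊆ V with |W| ≤ ℓ such that every edge of G' that is not an edge of G has both endpoints in W. Then for every k ≥ 1, |N_k(G') − N_k(G)| ≤ ℓ·k. (In one step of an ℓ-vertex process, at most ℓ components are destroyed and at most ℓ are created, so N_k changes by at most ℓk.) -/
/-!
Let `X` be the set of vertices whose `G`-component meets `W`. Every new edge lies inside `W`,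
so a vertex outside `X` has the same component in `G'` as in `G`: the sets counted by
`N_k(G)` and `N_k(G')` agree outside `X`. Inside `X`, each side is covered by at most `|W|`
components of size `k` (for `G'`, because every `G`-component lies in a `G'`-component),
so it has at most `ℓ k` elements there.
-/

/-- The number of vertices in the connected component of `v` in `G`. -/
noncomputable def compSize {V : Type*} [Fintype V] (G : SimpleGraph V) (v : V) : ℕ :=
  Set.ncard {w | G.Reachable v w}

/-- The number of vertices of `G` lying in components with exactly `k` vertices. -/
noncomputable def numInCompOfSize {V : Type*} [Fintype V] (G : SimpleGraph V) (k : ℕ) : ℕ :=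
  Set.ncard {v | compSize G v = k}

open Set

lemma ncard_le_ncard_add_ncard_inter_of_diff_eq {α : Type*} [Finite α] {A A' X : Set α}
    (hdiff : A \ X = A' \ X) : A.ncard ≤ A'.ncard + (A ∩ X).ncard := by
  have hsub : A ⊆ A' ∪ (A ∩ X) := by
    intro v hv
    by_cases hvX : v ∈ X
    · exact Or.inr ⟨hv, hvX⟩
    · exact Or.inl (hdiff ▸ ⟨hv, hvX⟩ : v ∈ A' \ X).1
  exact (ncard_le_ncard hsub).trans (ncard_union_le _ _)

namespace SimpleGraph

variable {V : Type*}

lemma reachable_of_reachable_of_forall_reachable_not_mem {G G' : SimpleGraph V} {W : Set V}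
    (hedges : ∀ a b : V, G'.Adj a b → ¬ G.Adj a b → a ∈ W ∧ b ∈ W) {v x : V}
    (hv : ∀ u, G.Reachable v u → u ∉ W) (hx : G'.Reachable v x) : G.Reachable v x := by
  obtain ⟨p⟩ := hx
  induction p with
  | nil => rfl
  | @cons a b c hab p ih =>
    have hGab : G.Adj a b := by
      by_contra hn
      exact hv a (Reachable.refl a) (hedges a b hab hn).1
    exact hGab.reachable.trans (ih fun u hu => hv u (hGab.reachable.trans hu))

end SimpleGraph

open SimpleGraph

section

variable {V : Type*} [Fintype V]

lemma compSize_eq_of_reachable {H : SimpleGraph V} {v w : V} (h : H.Reachable v w) :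
    compSize H v = compSize H w := by
  unfold compSize
  congr 1
  ext x
  exact ⟨h.symm.trans, h.trans⟩

lemma compSize_eq_of_forall_reachable_not_mem {G G' : SimpleGraph V} (h : G ≤ G') {W : Set V}
    (hedges : ∀ a b : V, G'.Adj a b → ¬ G.Adj a b → a ∈ W ∧ b ∈ W) {v : V}
    (hv : ∀ u, G.Reachable v u → u ∉ W) : compSize G' v = compSize G v := by
  unfold compSize
  congr 1
  ext x
  exact ⟨reachable_of_reachable_of_forall_reachable_not_mem hedges hv, fun hx => hx.mono h⟩

lemma ncard_reachable_compSize_eq_le (H : SimpleGraph V) (k : ℕ) (w : V) :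
    {v | H.Reachable w v ∧ compSize H v = k}.ncard ≤ k := by
  rcases eq_empty_or_nonempty {v | H.Reachable w v ∧ compSize H v = k} with he | ⟨v, hwv, hv⟩
  · simp [he]
  · calc {v | H.Reachable w v ∧ compSize H v = k}.ncard
        ≤ {v | H.Reachable w v}.ncard := ncard_le_ncard fun _ hu => hu.1
      _ = k := (compSize_eq_of_reachable hwv).trans hv

lemma ncard_compSize_eq_inter_reachable_le (H : SimpleGraph V) (k : ℕ) (W : Set V) :
    ({v | compSize H v = k} ∩ {v | ∃ w ∈ W, H.Reachable v w}).ncard ≤ W.ncard * k := by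
  classical
  have hsub : {v | compSize H v = k} ∩ {v | ∃ w ∈ W, H.Reachable v w} ⊆
      ⋃ w ∈ W.toFinset, {v | H.Reachable w v ∧ compSize H v = k} := by
    rintro v ⟨hv, w, hw, hvw⟩
    exact mem_biUnion (mem_toFinset.2 hw) ⟨hvw.symm, hv⟩
  calc _ ≤ _ := ncard_le_ncard hsub
    _ ≤ ∑ w ∈ W.toFinset, {v | H.Reachable w v ∧ compSize H v = k}.ncard :=
        Finset.set_ncard_biUnion_le _ _
    _ ≤ W.toFinset.card * k :=
        Finset.sum_le_card_nsmul _ _ _ fun w _ => ncard_reachable_compSize_eq_le H k w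
    _ = W.ncard * k := by rw [ncard_eq_toFinset_card']

end

theorem Nk_change_le_general (V : Type*) [Fintype V] (ℓ : ℕ)
    (G G' : SimpleGraph V) (h : G ≤ G') (W : Set V) (hW : W.ncard ≤ ℓ)
    (hedges : ∀ a b : V, G'.Adj a b → ¬ G.Adj a b → a ∈ W ∧ b ∈ W) :
    ∀ k : ℕ, 1 ≤ k →
      |(numInCompOfSize G' k : ℤ) - (numInCompOfSize G k : ℤ)| ≤ ℓ * k := by
  intro k _
  set X := {v | ∃ w ∈ W, G.Reachable v w}
  have hdiff : {v | compSize G' v = k} \ X = {v | compSize G v = k} \ X := by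
    ext v
    refine and_congr_left fun hvX => ?_
    rw [mem_ofPred_eq, mem_ofPred_eq,
      compSize_eq_of_forall_reachable_not_mem h hedges fun u hu huW => hvX ⟨u, huW, hu⟩]
  have hG : ({v | compSize G v = k} ∩ X).ncard ≤ ℓ * k :=
    (ncard_compSize_eq_inter_reachable_le G k W).trans (Nat.mul_le_mul_right k hW)
  have hG' : ({v | compSize G' v = k} ∩ X).ncard ≤ ℓ * k := by
    have hX : X ⊆ {v | ∃ w ∈ W, G'.Reachable v w} := fun _ ⟨w, hw, hvw⟩ => ⟨w, hw, hvw.mono h⟩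
    exact (ncard_le_ncard (inter_subset_inter_right _ hX)).trans
      ((ncard_compSize_eq_inter_reachable_le G' k W).trans (Nat.mul_le_mul_right k hW))
  have h₁ := ncard_le_ncard_add_ncard_inter_of_diff_eq hdiff
  have h₂ := ncard_le_ncard_add_ncard_inter_of_diff_eq hdiff.symm
  unfold numInCompOfSize
  rw [abs_sub_le_iff]
  omega

/-- If `G'` is obtained from `G` by adding edges all of whose endpoints lie in a set `W`
of at most `ℓ` vertices, then for every `k ≥ 1` the quantity `N_k` changes by at most
`ℓ·k`: at most `ℓ` components are destroyed and at most `ℓ` are created. -/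
theorem Nk_change_le (V : Type*) [Fintype V] (ℓ : ℕ) (hℓ : 1 ≤ ℓ)
    (G G' : SimpleGraph V) (h : G ≤ G') (W : Set V) (hW : W.ncard ≤ ℓ)
    (hedges : ∀ a b : V, G'.Adj a b → ¬ G.Adj a b → a ∈ W ∧ b ∈ W) :
    ∀ k : ℕ, 1 ≤ k →
      |(numInCompOfSize G' k : ℤ) - (numInCompOfSize G k : ℤ)| ≤ ℓ * k :=
  Nk_change_le_general V ℓ G G' h W hW hedges
end

section
/- Let m be a positive integer and let N be a Poisson random variable with mean m on a probability space (Ω, P). Then for every measurable event A ⊆ Ω, the conditional probability satisfies P(A | N = m) ≤ 3·√m · P(A); equivalently, P(A ∩ {N = m}) ≤ 3·√m · P(A) · P(N = m). (This is the abstract form of Pittel's inequality, transferring bounds from the Poissonized model to the model with exactly m steps.) -/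
/-!
Since `P(A ∩ {N = m}) ≤ P(A)`, it suffices that `1 ≤ 3√m · P(N = m)`, i.e.
`m! ≤ 3√m · mᵐ e⁻ᵐ`. This is the non-asymptotic Stirling bound `m! ≤ e√m (m/e)ᵐ`
together with `e ≤ 3`; the Stirling bound holds because `n! / (√(2n) (n/e)ⁿ)` decreases
for `n ≥ 1` and equals `e/√2` at `n = 1`.
-/

open MeasureTheory Real
open scoped Nat ENNReal

namespace Stirling

theorem stirlingSeq_le_exp_one_div_sqrt_two {n : ℕ} (hn : n ≠ 0) :
    stirlingSeq n ≤ exp 1 / √2 := by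
  obtain ⟨k, rfl⟩ := Nat.exists_eq_succ_of_ne_zero hn
  simpa using stirlingSeq'_antitone (Nat.zero_le k)

theorem factorial_le_exp_one_mul_sqrt_mul_stirling {n : ℕ} (hn : n ≠ 0) :
    (n ! : ℝ) ≤ exp 1 * √n * (n / exp 1) ^ n := by
  have h := stirlingSeq_le_exp_one_div_sqrt_two hn
  rw [stirlingSeq, div_le_iff₀ (by positivity)] at h
  refine h.trans_eq ?_
  rw [sqrt_mul' 2 n.cast_nonneg]
  field_simp

end Stirling

theorem one_le_three_mul_sqrt_mul_exp_neg_mul_pow_div_factorial {m : ℕ} (hm : m ≠ 0) :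
    1 ≤ 3 * √m * (exp (-(m : ℝ)) * (m : ℝ) ^ m / m !) := by
  have hpow : ((m : ℝ) / exp 1) ^ m = exp (-(m : ℝ)) * (m : ℝ) ^ m := by
    rw [div_pow, ← exp_nat_mul, mul_one, exp_neg, div_eq_inv_mul]
  have hfac : (m ! : ℝ) ≤ 3 * √m * (exp (-(m : ℝ)) * (m : ℝ) ^ m) :=
    calc (m ! : ℝ) ≤ exp 1 * √m * (m / exp 1) ^ m :=
          Stirling.factorial_le_exp_one_mul_sqrt_mul_stirling hm
      _ ≤ 3 * √m * (m / exp 1) ^ m := by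
          gcongr
          exact exp_one_lt_d9.le.trans (by norm_num)
      _ = 3 * √m * (exp (-(m : ℝ)) * (m : ℝ) ^ m) := by rw [hpow]
  rwa [← mul_div_assoc, one_le_div (by positivity)]

theorem MeasureTheory.measure_inter_le_mul_mul_of_one_le_mul {α : Type*} [MeasurableSpace α]
    (μ : Measure α) (s t : Set α) {c : ℝ≥0∞} (h : 1 ≤ c * μ t) :
    μ (s ∩ t) ≤ c * μ s * μ t :=
  calc μ (s ∩ t) ≤ 1 * μ s := by rw [one_mul]; exact measure_mono Set.inter_subset_left
    _ ≤ c * μ t * μ s := by gcongr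
    _ = c * μ s * μ t := mul_right_comm _ _ _

theorem pittel_inequality_general (m : ℕ) (hm : 0 < m)
    (Ω : Type) [MeasurableSpace Ω] (P : Measure Ω)
    (N : Ω → ℕ)
    (hN : ∀ k : ℕ, P {ω | N ω = k}
      = ENNReal.ofReal (Real.exp (-(m : ℝ)) * (m : ℝ) ^ k / k.factorial))
    (A : Set Ω) :
    P (A ∩ {ω | N ω = m})
      ≤ ENNReal.ofReal (3 * Real.sqrt m) * P A * P {ω | N ω = m} := by
  refine measure_inter_le_mul_mul_of_one_le_mul P A _ ?_
  rw [hN m, ← ENNReal.ofReal_mul (by positivity), ← ENNReal.ofReal_one]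
  exact ENNReal.ofReal_le_ofReal (one_le_three_mul_sqrt_mul_exp_neg_mul_pow_div_factorial hm.ne')

/-- **Abstract form of Pittel's inequality.** Let `N` be a Poisson random variable with
mean a positive integer `m`. For every measurable event `A`,
`P(A ∩ {N = m}) ≤ 3√m · P(A) · P(N = m)`, i.e. `P(A | N = m) ≤ 3√m · P(A)`. -/
theorem pittel_inequality (m : ℕ) (hm : 0 < m)
    (Ω : Type) [MeasurableSpace Ω] (P : Measure Ω) [IsProbabilityMeasure P]
    (N : Ω → ℕ) (hNmeas : Measurable N)
    (hN : ∀ k : ℕ, P {ω | N ω = k}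
      = ENNReal.ofReal (Real.exp (-(m : ℝ)) * (m : ℝ) ^ k / k.factorial))
    (A : Set Ω) (hA : MeasurableSet A) :
    P (A ∩ {ω | N ω = m})
      ≤ ENNReal.ofReal (3 * Real.sqrt m) * P A * P {ω | N ω = m} :=
  pittel_inequality_general m hm Ω P N hN A
end
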